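/- arXiv:1303.2423 — 4 statements merged into one kernel-verified Lean document; each statement's English description precedes it below -/
import Mathlib

section
/- Let φ be an update function for a transition kernel K on G with stationary distribution π, x ∈ G a starting point, u_1,...,u_n ∈ [0,1]^s a driver sequence generating x_i = φ_i(x; u_1,...,u_i), and 𝒜 ⊆ B(G) a family of test sets. Define D*_{𝒜,π}(P_n) = sup_{A∈𝒜} |n^{-1}Σ_{i=1}^n 1_{x_i∈A} − π(A)| and the push-back discrepancy D*_{𝒜,φ}(U_n) = sup_{A∈𝒜} |n^{-1}Σ_{i=1}^n [1_{(u_1,...,u_i)∈B_i(x,A)} − λ_{is}(B_i(x,A))]|. Then |D*_{𝒜,π}(P_n) − D*_{𝒜,φ}(U_n)| ≤ sup_{A∈𝒜} |n^{-1} Σ_{i=1}^n K^i(x,A) − π(A)|. -/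
open MeasureTheory Classical

/-- The unit cube `[0,1]^s`. -/
abbrev Cube (s : ℕ) := Fin s → unitInterval

/-- Iterates of an update function on finite driver tuples:
`iterFin φ i x u = φ_i(x; u_1, …, u_i)`. -/
def iterFin {G : Type*} {s : ℕ} (φ : G → Cube s → G) :
    (i : ℕ) → G → (Fin i → Cube s) → G
  | 0, x, _ => x
  | n + 1, x, u => φ (iterFin φ n x (fun k => u k.castSucc)) (u (Fin.last n))

/-- The iterated transition kernel: `Kiter K 0 x = δ_x` and
`K^{i+1}(x,A) = ∫_G K(y,A) K^i(x,dy)`. -/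
noncomputable def Kiter {G : Type*} [MeasurableSpace G] (K : G → Measure G) :
    ℕ → G → Measure G
  | 0, x => Measure.dirac x
  | n + 1, x => (Kiter K n x).bind K

/-!
Since `K(y, ·)` is the law of `φ(y; ·)` under `λ_s`, and `Fin.snoc` identifies `λ_{(i+1)s}` with
`λ_{is} ⊗ λ_s`, induction on `i` shows that `K^i(x, ·)` is the image of `λ_{is}` under
`φ_i(x; ·)`, i.e. `λ_{is}(B_i(x, A)) = K^i(x, A)`. For each test set `A`, with `a` the empirical
frequency, `b` the averaged kernel mass and `p = π(A)`, the two discrepancies are `|a - p|` and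
`|a - b|`, and `||a - p| - |a - b|| ≤ |b - p|`. All three quantities lie in `[0, 1]`, so the
suprema over `𝒜` are finite and the pointwise inequality passes to them.
-/

lemma abs_ciSup_sub_ciSup_le {ι : Type*} {f g h : ι → ℝ} (hf : BddAbove (Set.range f))
    (hg : BddAbove (Set.range g)) (hh : BddAbove (Set.range h)) (hfg : ∀ i, |f i - g i| ≤ h i) :
    |(⨆ i, f i) - (⨆ i, g i)| ≤ ⨆ i, h i := by
  rcases isEmpty_or_nonempty ι with hι | hι
  · simp [Real.iSup_of_isEmpty]
  refine abs_sub_le_iff.2 ⟨sub_le_iff_le_add.2 <| ciSup_le fun i => ?_,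
    sub_le_iff_le_add.2 <| ciSup_le fun i => ?_⟩
  · calc f i ≤ h i + g i := by linarith [(abs_le.1 (hfg i)).2]
      _ ≤ _ := add_le_add (le_ciSup hh i) (le_ciSup hg i)
  · calc g i ≤ h i + f i := by linarith [(abs_le.1 (hfg i)).1]
      _ ≤ _ := add_le_add (le_ciSup hh i) (le_ciSup hf i)

lemma bddAbove_range_abs_sub_of_mem_Icc {ι : Type*} {a b : ι → ℝ}
    (ha : ∀ i, a i ∈ Set.Icc 0 1) (hb : ∀ i, b i ∈ Set.Icc 0 1) :
    BddAbove (Set.range fun i => |a i - b i|) :=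
  ⟨1, Set.forall_mem_range.2 fun i =>
    abs_sub_le_iff.2 ⟨by linarith [(ha i).2, (hb i).1], by linarith [(ha i).1, (hb i).2]⟩⟩

lemma abs_iSup_abs_sub_sub_iSup_abs_sub_le {ι : Type*} {a b p : ι → ℝ}
    (ha : ∀ i, a i ∈ Set.Icc 0 1) (hb : ∀ i, b i ∈ Set.Icc 0 1) (hp : ∀ i, p i ∈ Set.Icc 0 1) :
    |(⨆ i, |a i - p i|) - (⨆ i, |a i - b i|)| ≤ ⨆ i, |b i - p i| :=
  abs_ciSup_sub_ciSup_le (bddAbove_range_abs_sub_of_mem_Icc ha hp)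
    (bddAbove_range_abs_sub_of_mem_Icc ha hb) (bddAbove_range_abs_sub_of_mem_Icc hb hp)
    fun i => by simpa using abs_abs_sub_abs_le_abs_sub (a i - p i) (a i - b i)

lemma inv_card_mul_sum_mem_Icc {ι : Type*} (s : Finset ι) {f : ι → ℝ}
    (hf : ∀ i ∈ s, f i ∈ Set.Icc 0 1) : (s.card : ℝ)⁻¹ * ∑ i ∈ s, f i ∈ Set.Icc 0 1 := by
  have hsum : ∑ i ∈ s, f i ≤ s.card := by
    simpa using Finset.sum_le_card_nsmul s f 1 fun i hi => (hf i hi).2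
  rw [inv_mul_eq_div]
  exact ⟨div_nonneg (Finset.sum_nonneg fun i hi => (hf i hi).1) (Nat.cast_nonneg _),
    div_le_one_of_le₀ hsum (Nat.cast_nonneg _)⟩

lemma measurable_measure_map_of_measurable_uncurry {G α β : Type*} [MeasurableSpace G]
    [MeasurableSpace α] [MeasurableSpace β] (ν : Measure α) [SFinite ν] {f : G → α → β}
    (hf : Measurable (Function.uncurry f)) : Measurable fun y => ν.map (f y) := by
  convert (Measure.measurable_map _ hf).comp (Measurable.map_prodMk_left (ν := ν)) using 2 with y
  exact (Measure.map_map hf measurable_prodMk_left).symm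

lemma measurePreserving_snoc {α : Type*} [MeasureSpace α] [SigmaFinite (volume : Measure α)]
    (n : ℕ) :
    MeasurePreserving (fun p : (Fin n → α) × α => (Fin.snoc p.1 p.2 : Fin (n + 1) → α)) := by
  convert ((volume_preserving_piFinSuccAbove (fun _ : Fin (n + 1) => α) (Fin.last n)).symm).comp
    (Measure.measurePreserving_swap (μ := (volume : Measure (Fin n → α))) (ν := volume)) using 1
  · funext p
    exact (Fin.insertNth_last' p.2 p.1).symm
  · exact Measure.volume_eq_prod _ _

section Update

variable {G : Type*} {s : ℕ} {φ : G → Cube s → G}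

@[simp]
lemma iterFin_snoc (n : ℕ) (x : G) (w : Fin n → Cube s) (c : Cube s) :
    iterFin φ (n + 1) x (Fin.snoc w c) = φ (iterFin φ n x w) c := by
  simp [iterFin]

variable [MeasurableSpace G] (hφ : Measurable fun p : G × Cube s => φ p.1 p.2)
include hφ

lemma measurable_iterFin (x : G) : ∀ i, Measurable (iterFin φ i x)
  | 0 => measurable_const
  | n + 1 => hφ.comp (((measurable_iterFin x n).comp
      (measurable_pi_lambda _ fun k => measurable_pi_apply k.castSucc)).prodMk
      (measurable_pi_apply (Fin.last n)))

variable {K : G → Measure G} (hK : ∀ y, K y = (volume : Measure (Cube s)).map (φ y))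
include hK

lemma Kiter_eq_map_iterFin (x : G) (i : ℕ) :
    Kiter K i x = (volume : Measure (Fin i → Cube s)).map (iterFin φ i x) := by
  obtain rfl : K = _ := funext hK
  induction i with
  | zero =>
    change Measure.dirac x = Measure.map (fun _ => x) volume
    simp
  | succ n ih =>
    ext A hA
    have hpreimage : MeasurableSet {p : (Fin n → Cube s) × Cube s | φ (iterFin φ n x p.1) p.2 ∈ A} :=
      hφ.comp ((measurable_iterFin hφ x n).comp measurable_fst |>.prodMk measurable_snd) hA
    have hK_meas := measurable_measure_map_of_measurable_uncurry volume hφ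
    calc _ = ∫⁻ w, volume (φ (iterFin φ n x w) ⁻¹' A) := by
          rw [Kiter, Measure.bind_apply hA hK_meas.aemeasurable, ih,
            lintegral_map (f := fun y => (volume : Measure (Cube s)).map (φ y) A)
              ((Measure.measurable_coe hA).comp hK_meas) (measurable_iterFin hφ x n)]
          refine lintegral_congr fun w => ?_
          exact Measure.map_apply (hφ.comp measurable_prodMk_left) hA
      _ = (volume : Measure ((Fin n → Cube s) × Cube s))
            {p | φ (iterFin φ n x p.1) p.2 ∈ A} := (Measure.prod_apply hpreimage).symm
      _ = _ := by
          rw [Measure.map_apply (measurable_iterFin hφ x (n + 1)) hA,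
            ← (measurePreserving_snoc n).measure_preimage
              (measurable_iterFin hφ x (n + 1) hA).nullMeasurableSet]
          congr 1
          ext p
          simp

lemma Kiter_apply_eq_volume (x : G) (i : ℕ) {A : Set G} (hA : MeasurableSet A) :
    Kiter K i x A = volume {v : Fin i → Cube s | iterFin φ i x v ∈ A} := by
  rw [Kiter_eq_map_iterFin hφ hK, Measure.map_apply (measurable_iterFin hφ x i) hA]
  rfl

lemma isProbabilityMeasure_Kiter (x : G) (i : ℕ) : IsProbabilityMeasure (Kiter K i x) := by
  rw [Kiter_eq_map_iterFin hφ hK]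
  exact Measure.isProbabilityMeasure_map (measurable_iterFin hφ x i).aemeasurable

end Update

theorem discrepancy_sub_pushback_le_general {G : Type*} [MeasurableSpace G] {s : ℕ}
    (K : G → Measure G) (φ : G → Cube s → G) (π : Measure G) [IsProbabilityMeasure π]
    (hφ : Measurable fun p : G × Cube s => φ p.1 p.2)
    (hupdate : ∀ (x : G) (A : Set G), MeasurableSet A →
      K x A = volume {u : Cube s | φ x u ∈ A})
    (𝒜 : Set (Set G)) (h𝒜 : ∀ A ∈ 𝒜, MeasurableSet A)
    (n : ℕ) (x : G) (u : Fin n → Cube s) :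
    |(⨆ A : 𝒜, |(n : ℝ)⁻¹ * ∑ i : Fin n,
          (if iterFin φ (i.1 + 1) x (fun k => u (Fin.castLE i.isLt k)) ∈ (A : Set G)
            then (1 : ℝ) else 0) - (π A).toReal|)
      - (⨆ A : 𝒜, |(n : ℝ)⁻¹ * ∑ i : Fin n,
          ((if iterFin φ (i.1 + 1) x (fun k => u (Fin.castLE i.isLt k)) ∈ (A : Set G)
              then (1 : ℝ) else 0)
            - (volume {v : Fin (i.1 + 1) → Cube s | iterFin φ (i.1 + 1) x v ∈ (A : Set G)}).toReal)|)|
    ≤ ⨆ A : 𝒜, |(n : ℝ)⁻¹ * ∑ i : Fin n, (Kiter K (i.1 + 1) x (A : Set G)).toReal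
        - (π A).toReal| := by
  have hK (y : G) : K y = (volume : Measure (Cube s)).map (φ y) := by
    ext A hA
    rw [hupdate y A hA]
    exact (Measure.map_apply (hφ.comp measurable_prodMk_left) hA).symm
  have havg (f : Fin n → ℝ) (hf : ∀ i, f i ∈ Set.Icc 0 1) :
      (n : ℝ)⁻¹ * ∑ i, f i ∈ Set.Icc 0 1 := by
    simpa using inv_card_mul_sum_mem_Icc Finset.univ fun i _ => hf i
  have hempirical (A : Set G) : (n : ℝ)⁻¹ * ∑ i : Fin n,
      (if iterFin φ (i.1 + 1) x (fun k => u (Fin.castLE i.isLt k)) ∈ A then (1 : ℝ) else 0)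
        ∈ Set.Icc 0 1 :=
    havg _ fun i => by split_ifs <;> simp
  have hkernel (A : Set G) :
      (n : ℝ)⁻¹ * ∑ i : Fin n, (Kiter K (i.1 + 1) x A).toReal ∈ Set.Icc 0 1 := by
    have := isProbabilityMeasure_Kiter hφ hK x
    exact havg _ fun i => ⟨ENNReal.toReal_nonneg, measureReal_le_one⟩
  have hπ (A : Set G) : (π A).toReal ∈ Set.Icc 0 1 := ⟨ENNReal.toReal_nonneg, measureReal_le_one⟩
  convert abs_iSup_abs_sub_sub_iSup_abs_sub_le (fun A : 𝒜 => hempirical A)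
    (fun A => hkernel A) (fun A => hπ A) using 4
  funext A
  rw [Finset.sum_sub_distrib, mul_sub]
  simp_rw [Kiter_apply_eq_volume hφ hK x _ (h𝒜 A A.2)]

/-- Theorem (comparison of the discrepancy of the Markov chain points with the
push-back discrepancy of the driver sequence):
`|D*_{𝒜,π}(P_n) − D*_{𝒜,φ}(U_n)| ≤ sup_{A∈𝒜} |n⁻¹ Σ_{i=1}^n K^i(x,A) − π(A)|`. -/
theorem discrepancy_sub_pushback_le {G : Type*} [MeasurableSpace G] {s : ℕ}
    (K : G → Measure G) (φ : G → Cube s → G) (π : Measure G) [IsProbabilityMeasure π]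
    (hprob : ∀ x, IsProbabilityMeasure (K x))
    (hKmeas : ∀ A : Set G, MeasurableSet A → Measurable fun x => K x A)
    (hφ : Measurable fun p : G × Cube s => φ p.1 p.2)
    (hstat : ∀ A : Set G, MeasurableSet A → ∫⁻ x, K x A ∂π = π A)
    (hupdate : ∀ (x : G) (A : Set G), MeasurableSet A →
      K x A = volume {u : Cube s | φ x u ∈ A})
    (𝒜 : Set (Set G)) (h𝒜 : ∀ A ∈ 𝒜, MeasurableSet A)
    (n : ℕ) (hn : 1 ≤ n) (x : G) (u : Fin n → Cube s) :
    |(⨆ A : 𝒜, |(n : ℝ)⁻¹ * ∑ i : Fin n,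
          (if iterFin φ (i.1 + 1) x (fun k => u (Fin.castLE i.isLt k)) ∈ (A : Set G)
            then (1 : ℝ) else 0) - (π A).toReal|)
      - (⨆ A : 𝒜, |(n : ℝ)⁻¹ * ∑ i : Fin n,
          ((if iterFin φ (i.1 + 1) x (fun k => u (Fin.castLE i.isLt k)) ∈ (A : Set G)
              then (1 : ℝ) else 0)
            - (volume {v : Fin (i.1 + 1) → Cube s | iterFin φ (i.1 + 1) x v ∈ (A : Set G)}).toReal)|)|
    ≤ ⨆ A : 𝒜, |(n : ℝ)⁻¹ * ∑ i : Fin n, (Kiter K (i.1 + 1) x (A : Set G)).toReal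
        - (π A).toReal| :=
  discrepancy_sub_pushback_le_general K φ π hφ hupdate 𝒜 h𝒜 n x u
end

section
/- Let G ⊆ ℝ^d and (G, B(G), π) a probability space, and 𝒜 = {(−∞, x) ∩ G : x ∈ (ℝ ∪ {±∞})^d} the family of anchored lower-left boxes intersected with G. Then for every δ > 0 there exists a δ-cover Γ_δ of 𝒜 with respect to π of cardinality |Γ_δ| ≤ (3 + 4c²dδ^{-2})^d, where c > 0 is an absolute constant. -/
/-!
For a single measurable coordinate `g`, the lower quantiles `q₁ ≤ ⋯ ≤ q_{n-1}` of `g` at the levels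
`k / n`, completed by `q₀ = -∞` and `qₙ = +∞`, cut the line into `n` pieces of mass at most `1 / n`:
if `q_k < x ≤ q_{k+1}` then `{g ≤ q_k} ⊆ {g < x} ⊆ {g < q_{k+1}}`, and the difference has mass
`μ{g < q_{k+1}} - μ{g ≤ q_k} ≤ (k + 1) / n - k / n`. This gives a `1 / n`-cover of the half-lines
of size `2n`. Intersecting such covers over the `d` coordinates gives a `d / n`-cover of the boxes
of size `(2n)^d`, and `n = ⌊d / δ⌋ + 1` (or `n = 1` when `δ ≥ 1`, where any sandwich has mass
at most `δ`) yields the bound with `c = 1`.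
-/

open MeasureTheory Set Filter Topology
open scoped ENNReal

variable {Ω : Type*} [MeasurableSpace Ω] {μ : Measure Ω}

def IsDeltaCover {ι : Type*} (μ : Measure Ω) (δ : ℝ) (𝒜 : ι → Set Ω)
    (Γ : Finset (Set Ω)) : Prop :=
  (∀ C ∈ Γ, MeasurableSet C) ∧
    ∀ i, ∃ C ∈ Γ, ∃ D ∈ Γ, C ⊆ 𝒜 i ∧ 𝒜 i ⊆ D ∧ μ.real (D \ C) ≤ δ

namespace IsDeltaCover

variable {ι : Type*} {δ δ' : ℝ} {𝒜 : ι → Set Ω} {Γ : Finset (Set Ω)}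

theorem mono (h : IsDeltaCover μ δ 𝒜 Γ) (hδ : δ ≤ δ') : IsDeltaCover μ δ' 𝒜 Γ := by
  refine ⟨h.1, fun i => ?_⟩
  obtain ⟨C, hC, D, hD, hCA, hAD, hCD⟩ := h.2 i
  exact ⟨C, hC, D, hD, hCA, hAD, hCD.trans hδ⟩

theorem min_one [IsProbabilityMeasure μ] (h : IsDeltaCover μ δ 𝒜 Γ) :
    IsDeltaCover μ (min δ 1) 𝒜 Γ := by
  refine ⟨h.1, fun i => ?_⟩
  obtain ⟨C, hC, D, hD, hCA, hAD, hCD⟩ := h.2 i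
  exact ⟨C, hC, D, hD, hCA, hAD, le_min hCD measureReal_le_one⟩

theorem pi {κ : Type*} [Fintype κ] [DecidableEq κ] [DecidableEq (Set Ω)] [IsFiniteMeasure μ]
    {I : κ → Type*} {δ : κ → ℝ} {𝒜 : ∀ j, I j → Set Ω} {Γ : κ → Finset (Set Ω)}
    (h : ∀ j, IsDeltaCover μ (δ j) (𝒜 j) (Γ j)) :
    IsDeltaCover μ (∑ j, δ j) (fun x : ∀ j, I j => {ω | ∀ j, ω ∈ 𝒜 j (x j)})
      ((Fintype.piFinset Γ).image fun C => ⋂ j, C j) := by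
  refine ⟨?_, fun x => ?_⟩
  · simp only [Finset.mem_image, Fintype.mem_piFinset]
    rintro _ ⟨C, hC, rfl⟩
    exact .iInter fun j => (h j).1 _ (hC j)
  choose C hC D hD hCA hAD hCD using fun j => (h j).2 (x j)
  refine ⟨⋂ j, C j, Finset.mem_image_of_mem _ (Fintype.mem_piFinset.2 hC),
    ⋂ j, D j, Finset.mem_image_of_mem _ (Fintype.mem_piFinset.2 hD),
    fun ω hω j => hCA j (mem_iInter.1 hω j),
    fun ω hω => mem_iInter.2 fun j => hAD j (hω j), ?_⟩
  calc μ.real ((⋂ j, D j) \ ⋂ j, C j) ≤ μ.real (⋃ j, D j \ C j) := by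
        rw [sdiff_iInter]
        exact measureReal_mono (iUnion_mono fun j => sdiff_subset_sdiff_left (iInter_subset _ j))
    _ ≤ ∑ j, μ.real (D j \ C j) := measureReal_iUnion_fintype_le _
    _ ≤ ∑ j, δ j := Finset.sum_le_sum fun j _ => hCD j

end IsDeltaCover

noncomputable def lowerQuantile (μ : Measure Ω) (g : Ω → ℝ) (c : ℝ≥0∞) : EReal :=
  sInf {t : EReal | c ≤ μ {ω | (g ω : EReal) ≤ t}}

section lowerQuantile

variable {g : Ω → ℝ} {c : ℝ≥0∞}

@[simp]
theorem lowerQuantile_zero : lowerQuantile μ g 0 = ⊥ := by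
  simp [lowerQuantile]

theorem le_measure_le_lowerQuantile [IsFiniteMeasure μ] (hg : Measurable g) (hc : c ≤ μ univ) :
    c ≤ μ {ω | (g ω : EReal) ≤ lowerQuantile μ g c} := by
  obtain ⟨u, hu, hlim, huS⟩ := exists_seq_tendsto_sInf
    (S := {t : EReal | c ≤ μ {ω | (g ω : EReal) ≤ t}}) ⟨⊤, by simpa using hc⟩
    (OrderBot.bddBelow _)
  have hinter :
      {ω | (g ω : EReal) ≤ lowerQuantile μ g c} = ⋂ n, {ω | (g ω : EReal) ≤ u n} := by
    ext ω
    simp only [mem_ofPred_eq, mem_iInter]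
    exact ⟨fun h n => h.trans (sInf_le (huS n)), ge_of_tendsto' hlim⟩
  have hanti : Antitone fun n => {ω | (g ω : EReal) ≤ u n} :=
    fun m n hmn ω hω => le_trans hω (hu hmn)
  rw [hinter, hanti.measure_iInter
    (fun n => (hg.coe_real_ereal measurableSet_Iic).nullMeasurableSet) ⟨0, measure_ne_top _ _⟩]
  exact le_iInf huS

theorem measure_lt_lowerQuantile_le (g : Ω → ℝ) (c : ℝ≥0∞) :
    μ {ω | (g ω : EReal) < lowerQuantile μ g c} ≤ c := by
  rcases eq_bot_or_bot_lt (lowerQuantile μ g c) with hq | hq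
  · simp [hq]
  obtain ⟨u, hu, huq, hlim⟩ := exists_seq_strictMono_tendsto' hq
  have hunion :
      {ω | (g ω : EReal) < lowerQuantile μ g c} = ⋃ n, {ω | (g ω : EReal) ≤ u n} := by
    ext ω
    simp only [mem_ofPred_eq, mem_iUnion]
    exact ⟨fun h => ((tendsto_order.1 hlim).1 _ h).exists.imp fun n => le_of_lt,
      fun ⟨n, h⟩ => h.trans_lt (huq n).2⟩
  have hmono : Monotone fun n => {ω | (g ω : EReal) ≤ u n} :=
    fun m n hmn ω hω => le_trans hω (hu.monotone hmn)
  rw [hunion, hmono.measure_iUnion]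
  exact iSup_le fun n => (not_le.1 fun h => not_le.2 (huq n).2 (sInf_le h)).le

end lowerQuantile

theorem exists_lt_and_le_succ {α : Type*} [LinearOrder α] (q : ℕ → α) {n : ℕ} (hn : 0 < n)
    {x : α} (hx : x ≤ q n) : ∃ k < n, (k = 0 ∨ q k < x) ∧ x ≤ q (k + 1) := by
  classical
  have hP : ∃ k, x ≤ q (k + 1) := ⟨n - 1, by rwa [Nat.sub_add_cancel hn]⟩
  refine ⟨Nat.find hP, ?_, ?_, Nat.find_spec hP⟩
  · have := Nat.find_min' hP (m := n - 1) (by rwa [Nat.sub_add_cancel hn])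
    omega
  · rcases h : Nat.find hP with _ | k
    · exact .inl rfl
    · exact .inr (not_le.1 (Nat.find_min hP (h ▸ k.lt_succ_self)))

theorem exists_isDeltaCover_lt [IsProbabilityMeasure μ] {g : Ω → ℝ} (hg : Measurable g) {n : ℕ}
    (hn : 0 < n) :
    ∃ Γ : Finset (Set Ω), Γ.card ≤ 2 * n ∧
      IsDeltaCover μ (n : ℝ)⁻¹ (fun x : EReal => {ω | (g ω : EReal) < x}) Γ := by
  classical
  let q : ℕ → EReal := fun k => if k < n then lowerQuantile μ g (.ofReal (k / n)) else ⊤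
  let A : ℕ → Set Ω := fun k => {ω | (g ω : EReal) ≤ q k}
  let B : ℕ → Set Ω := fun k => {ω | (g ω : EReal) < q (k + 1)}
  refine ⟨(Finset.range n).image A ∪ (Finset.range n).image B, ?_, ?_, fun x => ?_⟩
  · refine (Finset.card_union_le _ _).trans ?_
    have := (Finset.card_image_le (s := Finset.range n) (f := A)).trans (Finset.card_range n).le
    have := (Finset.card_image_le (s := Finset.range n) (f := B)).trans (Finset.card_range n).le
    omega
  · simp only [Finset.mem_union, Finset.mem_image]
    rintro _ (⟨k, -, rfl⟩ | ⟨k, -, rfl⟩)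
    exacts [hg.coe_real_ereal measurableSet_Iic, hg.coe_real_ereal measurableSet_Iio]
  obtain ⟨k, hkn, hqk, hxq⟩ := exists_lt_and_le_succ q hn (x := x) (by simp [q])
  have hAx : A k ⊆ {ω | (g ω : EReal) < x} := by
    rcases hqk with rfl | hqk
    · simp [A, q, hn]
    · exact fun ω hω => lt_of_le_of_lt hω hqk
  have hxB : {ω | (g ω : EReal) < x} ⊆ B k := fun ω hω => lt_of_lt_of_le hω hxq
  have hA : (k : ℝ) / n ≤ μ.real (A k) := by
    have hkn' : (k : ℝ) / n ≤ 1 := div_le_one_of_le₀ (by exact_mod_cast hkn.le) (by positivity)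
    have := le_measure_le_lowerQuantile (μ := μ) hg (c := .ofReal (k / n)) (by simpa using hkn')
    simpa [A, q, hkn, Measure.real] using
      (ENNReal.ofReal_le_iff_le_toReal (measure_ne_top _ _)).1 this
  have hB : μ.real (B k) ≤ (k + 1 : ℝ) / n := by
    by_cases hk : k + 1 < n
    · have := measure_lt_lowerQuantile_le (μ := μ) g (.ofReal ((k + 1 : ℕ) / n))
      simpa [B, q, hk, Measure.real] using ENNReal.toReal_le_of_le_ofReal (by positivity) this
    · have hkn' : k + 1 = n := by omega
      rw [← Nat.cast_add_one, hkn', div_self (by positivity)]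
      exact measureReal_le_one
  have hk : k ∈ Finset.range n := Finset.mem_range.2 hkn
  refine ⟨A k, Finset.mem_union_left _ (Finset.mem_image_of_mem A hk),
    B k, Finset.mem_union_right _ (Finset.mem_image_of_mem B hk), hAx, hxB, ?_⟩
  rw [measureReal_sdiff (hAx.trans hxB) (hg.coe_real_ereal measurableSet_Iic)]
  calc μ.real (B k) - μ.real (A k) ≤ (k + 1 : ℝ) / n - k / n := by linarith
    _ = (n : ℝ)⁻¹ := by field_simp; ring

theorem exists_nat_min_div_le (d : ℕ) {δ : ℝ} (hδ : 0 < δ) :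
    ∃ n : ℕ, 0 < n ∧ min ((d : ℝ) / n) 1 ≤ δ ∧ 2 * (n : ℝ) ≤ 3 + 4 * d * δ⁻¹ ^ 2 := by
  rcases le_or_gt 1 δ with hδ1 | hδ1
  · have : 0 ≤ 4 * (d : ℝ) * δ⁻¹ ^ 2 := by positivity
    exact ⟨1, one_pos, (min_le_right _ _).trans hδ1, by push_cast; linarith⟩
  refine ⟨⌊d / δ⌋₊ + 1, Nat.succ_pos _, (min_le_left _ _).trans ?_, ?_⟩
  · rw [div_le_iff₀ (by positivity), ← div_le_iff₀' hδ]
    exact_mod_cast (Nat.lt_floor_add_one _).le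
  · have hfloor : (⌊d / δ⌋₊ : ℝ) ≤ d * δ⁻¹ := Nat.floor_le (by positivity)
    have hinv : 2 * δ⁻¹ ≤ 4 * δ⁻¹ ^ 2 := by
      have : 1 ≤ δ⁻¹ := (one_le_inv₀ hδ).2 hδ1.le
      nlinarith
    push_cast
    nlinarith [(Nat.cast_nonneg d : (0 : ℝ) ≤ d)]

/-- Lemma (existence of small δ-covers for anchored boxes): there is an absolute
constant `c > 0` such that for every `d`, every `G ⊆ ℝ^d`, every probability measure
`π` on `G` and every `δ > 0` there is a `δ`-cover `Γδ` of the family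
`𝒜 = {(−∞,x) ∩ G : x ∈ (ℝ ∪ {±∞})^d}` with respect to `π` of cardinality
`|Γδ| ≤ (3 + 4c²d δ⁻²)^d`. -/
theorem exists_deltaCover_boxes :
    ∃ c : ℝ, 0 < c ∧
      ∀ (d : ℕ) (G : Set (Fin d → ℝ)) (π : Measure G), IsProbabilityMeasure π →
        ∀ δ : ℝ, 0 < δ →
          ∃ Γδ : Finset (Set G),
            (∀ C ∈ Γδ, MeasurableSet C) ∧
            (∀ x : Fin d → EReal,
              ∃ C ∈ Γδ, ∃ D ∈ Γδ,
                C ⊆ {y : G | ∀ j, ((y : Fin d → ℝ) j : EReal) < x j} ∧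
                {y : G | ∀ j, ((y : Fin d → ℝ) j : EReal) < x j} ⊆ D ∧
                (π (D \ C)).toReal ≤ δ) ∧
            (Γδ.card : ℝ) ≤ (3 + 4 * c ^ 2 * d * δ⁻¹ ^ 2) ^ d := by
  classical
  refine ⟨1, one_pos, fun d G π _ δ hδ => ?_⟩
  obtain ⟨n, hn, hnδ, hn_le⟩ := exists_nat_min_div_le d hδ
  choose Γ hΓcard hΓ using fun j : Fin d =>
    exists_isDeltaCover_lt (μ := π) ((measurable_pi_apply j).comp measurable_subtype_coe) hn
  have hcover := (IsDeltaCover.pi hΓ).min_one.mono (by simpa [div_eq_mul_inv] using hnδ)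
  refine ⟨_, hcover.1, hcover.2, ?_⟩
  calc (((Fintype.piFinset Γ).image fun C => ⋂ j, C j).card : ℝ)
      ≤ ∏ j, ((Γ j).card : ℝ) := by
        exact_mod_cast Finset.card_image_le.trans (Fintype.card_piFinset Γ).le
    _ ≤ ∏ _j : Fin d, (2 * n : ℝ) := by
        gcongr with j
        exact_mod_cast hΓcard j
    _ ≤ (3 + 4 * 1 ^ 2 * d * δ⁻¹ ^ 2) ^ d := by
        rw [Finset.prod_const, Finset.card_univ, Fintype.card_fin, one_pow, mul_one]
        exact pow_le_pow_left₀ (by positivity) hn_le d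
end

section
/- Let 1 ≤ p, q ≤ ∞ with 1/p + 1/q = 1, π a probability measure on G ⊆ ℝ^d, ρ a finite measure on G, and H_q the space of functions f: G → ℂ of the form f(x) = f_0 + ∫_G 1_{(−∞,z)_G}(x) f̃(z) ρ(dz) with f̃ ∈ L_q(G,ρ), normed by ‖f‖_{H_q} = (|f_0|^q + ∫|f̃|^q dρ)^{1/q}. Then for any points x_1,...,x_n ∈ G and any f ∈ H_q: |∫_G f dπ − n^{-1}Σ_{i=1}^n f(x_i)| ≤ ‖f‖_{H_q} · D*_{p,𝒜,π}(P_n), where D*_{p,𝒜,π}(P_n) = (∫_G |∫_G 1_{(−∞,z)_G}(y) π(dy) − n^{-1}Σ_i 1_{(−∞,z)_G}(x_i)|^p ρ(dz))^{1/p} (supremum over z when p = ∞). -/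
/-!
Substituting the representation of `f` and exchanging the order of integration (Fubini),
the quadrature error becomes `∫ h̃ f̃ dρ`, where `h̃(z) = π((−∞,z)_G) − n⁻¹ Σ 1_{(−∞,z)_G}(x_i)`
is the local discrepancy; the constant `f₀` cancels because `π` is a probability measure.
Hölder's inequality bounds this by `‖f̃‖_{L_q(ρ)} ‖h̃‖_{L_p(ρ)}`, and `‖f̃‖_{L_q(ρ)} ≤ ‖f‖_{H_q}`.
Nothing about boxes is used beyond measurability and boundedness of the kernel.
-/

open MeasureTheory Classical

/-- Indicator of the anchored box `(−∞,z)_G`. -/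
noncomputable def boxInd {d : ℕ} {G : Set (Fin d → ℝ)} (z x : G) : ℝ :=
  if ∀ j, (x : Fin d → ℝ) j < (z : Fin d → ℝ) j then 1 else 0

/-- The `H_q`-norm of a function `f(x) = f₀ + ∫ 1_{(−∞,z)_G}(x) f̃(z) ρ(dz)`,
namely `(|f₀|^q + ∫ |f̃|^q dρ)^{1/q}` (with the obvious modification for `q = ∞`),
realized as the `L_q`-norm of the pair `(f₀, f̃)` on `Unit ⊕ G` with the measure
`δ_() ⊕ ρ`. -/
noncomputable def Hnorm {d : ℕ} {G : Set (Fin d → ℝ)} (q : ENNReal)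
    (f₀ : ℂ) (ft : G → ℂ) (ρ : Measure G) : ENNReal :=
  eLpNorm (Sum.elim (fun _ : Unit => f₀) ft) q
    ((Measure.dirac ()).map Sum.inl + ρ.map Sum.inr)

open Function ENNReal

theorem eLpNorm_le_Hnorm {d : ℕ} {G : Set (Fin d → ℝ)} (q : ℝ≥0∞)
    (f₀ : ℂ) (ft : G → ℂ) (ρ : Measure G) :
    eLpNorm ft q ρ ≤ Hnorm q f₀ ft ρ := by
  have h_inr : MeasurableEmbedding (@Sum.inr Unit G) :=
    ⟨Sum.inr_injective, measurable_inr, fun _ hs => measurableSet_inr_image.2 hs⟩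
  calc eLpNorm ft q ρ = eLpNorm (Sum.elim (fun _ : Unit => f₀) ft) q (ρ.map Sum.inr) := by
        rw [h_inr.eLpNorm_map_measure]; rfl
    _ ≤ Hnorm q f₀ ft ρ := eLpNorm_mono_measure _ (Measure.le_add_left le_rfl)

theorem enorm_integral_smul_le_eLpNorm_mul_eLpNorm {α E : Type*} [MeasurableSpace α]
    [NormedAddCommGroup E] [NormedSpace ℝ E] {μ : Measure α} {p q : ℝ≥0∞} [HolderConjugate p q]
    {φ : α → ℝ} {f : α → E} (hφ : AEStronglyMeasurable φ μ) (hf : AEStronglyMeasurable f μ) :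
    ‖∫ a, φ a • f a ∂μ‖ₑ ≤ eLpNorm φ p μ * eLpNorm f q μ := by
  calc ‖∫ a, φ a • f a ∂μ‖ₑ ≤ ∫⁻ a, ‖φ a • f a‖ₑ ∂μ := enorm_integral_le_lintegral_enorm _
    _ = eLpNorm (φ • f) 1 μ := eLpNorm_one_eq_lintegral_enorm.symm
    _ ≤ eLpNorm φ p μ * eLpNorm f q μ := eLpNorm_smul_le_mul_eLpNorm hf hφ

section KernelRepresentation

variable {α β : Type*} [MeasurableSpace α] [MeasurableSpace β]

noncomputable def localDiscrepancy {n : ℕ} (K : β → α → ℝ) (π : Measure α) (x : Fin n → α)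
    (z : β) : ℝ :=
  ∫ y, K z y ∂π - (n : ℝ)⁻¹ * ∑ i, K z (x i)

variable {π : Measure α} {ρ : Measure β} {K : β → α → ℝ} {C : ℝ} {ft : β → ℂ}

theorem measurable_localDiscrepancy [SFinite π] (hK : Measurable (uncurry K)) {n : ℕ}
    (x : Fin n → α) : Measurable (localDiscrepancy K π x) := by
  have h_int : Measurable fun z => ∫ y, K z y ∂π :=
    hK.stronglyMeasurable.integral_prod_right'.measurable
  have h_sum : Measurable fun z => ∑ i, K z (x i) :=
    Finset.measurable_sum _ fun i _ => hK.comp (measurable_id.prodMk measurable_const)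
  exact h_int.sub (h_sum.const_mul _)

theorem integrable_kernel_mul (hK : Measurable (uncurry K)) (hKC : ∀ z y, ‖K z y‖ ≤ C)
    (hft : Integrable ft ρ) (y : α) : Integrable (fun z => (K z y : ℂ) * ft z) ρ :=
  hft.bdd_mul (c := C) (by fun_prop) (.of_forall fun z => by simpa using hKC z y)

theorem integrable_prod_kernel_mul [IsFiniteMeasure π] [SFinite ρ] (hK : Measurable (uncurry K))
    (hKC : ∀ z y, ‖K z y‖ ≤ C) (hft : Integrable ft ρ) :
    Integrable (uncurry fun y z => (K z y : ℂ) * ft z) (π.prod ρ) :=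
  (hft.comp_snd π).bdd_mul (c := C)
    (Complex.measurable_ofReal.comp (hK.comp measurable_swap)).aestronglyMeasurable
    (.of_forall fun yz => by simpa using hKC yz.2 yz.1)

theorem integral_sub_average_eq_integral_localDiscrepancy_smul [IsProbabilityMeasure π]
    [SFinite ρ] (hK : Measurable (uncurry K)) (hKC : ∀ z y, ‖K z y‖ ≤ C)
    (hft : Integrable ft ρ) {f₀ : ℂ} {f : α → ℂ}
    (hf : ∀ y, f y = f₀ + ∫ z, (K z y : ℂ) * ft z ∂ρ) {n : ℕ} (hn : n ≠ 0) (x : Fin n → α) :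
    ∫ y, f y ∂π - (n : ℝ)⁻¹ * ∑ i, f (x i) = ∫ z, localDiscrepancy K π x z • ft z ∂ρ := by
  have h_prod := integrable_prod_kernel_mul (π := π) hK hKC hft
  have h_pi : ∫ y, f y ∂π = f₀ + ∫ z, ∫ y, (K z y : ℂ) * ft z ∂π ∂ρ := by
    have h_inner : Integrable (fun y => ∫ z, (K z y : ℂ) * ft z ∂ρ) π :=
      h_prod.integral_prod_left
    simp only [hf]
    rw [integral_add (integrable_const f₀) h_inner, integral_const,
      probReal_univ, one_smul, integral_integral_swap h_prod]
  have h_avg : (((n : ℝ)⁻¹ : ℝ) : ℂ) * ∑ i, f (x i)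
      = f₀ + ∫ z, (n : ℂ)⁻¹ * ∑ i, (K z (x i) : ℂ) * ft z ∂ρ := by
    simp only [hf, Finset.sum_add_distrib, Finset.sum_const, Finset.card_univ, Fintype.card_fin,
      nsmul_eq_mul, mul_add,
      ← integral_finsetSum _ fun i _ => integrable_kernel_mul hK hKC hft (x i),
      ← integral_const_mul]
    push_cast
    field_simp
  have h_int_pi : Integrable (fun z => ∫ y, (K z y : ℂ) * ft z ∂π) ρ :=
    h_prod.integral_prod_right
  have h_int_avg : Integrable (fun z => (n : ℂ)⁻¹ * ∑ i, (K z (x i) : ℂ) * ft z) ρ :=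
    (integrable_finsetSum _ fun i _ => integrable_kernel_mul hK hKC hft (x i)).const_mul _
  rw [h_pi, h_avg, add_sub_add_left_eq_sub, ← integral_sub h_int_pi h_int_avg]
  congr 1 with z
  rw [integral_mul_const, integral_complex_ofReal]
  simp only [localDiscrepancy, Complex.real_smul, ← Finset.sum_mul]
  push_cast
  ring

theorem enorm_integral_sub_average_le [IsProbabilityMeasure π] [IsFiniteMeasure ρ]
    {p q : ℝ≥0∞} [HolderConjugate p q] (hK : Measurable (uncurry K)) (hKC : ∀ z y, ‖K z y‖ ≤ C)
    (hft : MemLp ft q ρ) {f₀ : ℂ} {f : α → ℂ} (hf : ∀ y, f y = f₀ + ∫ z, (K z y : ℂ) * ft z ∂ρ)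
    {n : ℕ} (hn : n ≠ 0) (x : Fin n → α) :
    ‖∫ y, f y ∂π - (n : ℝ)⁻¹ * ∑ i, f (x i)‖ₑ
      ≤ eLpNorm ft q ρ * eLpNorm (localDiscrepancy K π x) p ρ := by
  have h_int : Integrable ft ρ := hft.integrable (HolderConjugate.one_le q p)
  rw [integral_sub_average_eq_integral_localDiscrepancy_smul hK hKC h_int hf hn x, mul_comm]
  exact enorm_integral_smul_le_eLpNorm_mul_eLpNorm
    (measurable_localDiscrepancy hK x).aestronglyMeasurable hft.1

end KernelRepresentation

section AnchoredBox

variable {d : ℕ} {G : Set (Fin d → ℝ)}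

theorem measurable_coe_apply (j : Fin d) : Measurable fun y : G => (y : Fin d → ℝ) j :=
  (measurable_pi_apply j).comp measurable_subtype_coe

theorem measurable_uncurry_boxInd : Measurable (uncurry (boxInd (G := G))) := by
  refine Measurable.ite ?_ measurable_const measurable_const
  simp only [Set.ofPred_forall]
  exact MeasurableSet.iInter fun j => measurableSet_lt
    ((measurable_coe_apply j).comp measurable_snd) ((measurable_coe_apply j).comp measurable_fst)

theorem norm_boxInd_le_one (z y : G) : ‖boxInd z y‖ ≤ 1 := by
  unfold boxInd
  split_ifs <;> simp

theorem integral_boxInd (π : Measure G) (z : G) :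
    ∫ y, boxInd z y ∂π = (π {y : G | ∀ j, (y : Fin d → ℝ) j < (z : Fin d → ℝ) j}).toReal := by
  have h_box : MeasurableSet {y : G | ∀ j, (y : Fin d → ℝ) j < (z : Fin d → ℝ) j} := by
    simp only [Set.ofPred_forall]
    exact MeasurableSet.iInter fun j => measurableSet_lt (measurable_coe_apply j) measurable_const
  rw [← measureReal_def, ← integral_indicator_one h_box]
  congr 1 with y
  simp only [boxInd, Set.indicator_apply, Set.mem_ofPred_eq, Pi.one_apply]

end AnchoredBox

theorem koksma_hlawka_Hq_general {d : ℕ} {G : Set (Fin d → ℝ)}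
    (π ρ : Measure G) [IsProbabilityMeasure π] [IsFiniteMeasure ρ]
    (p q : ENNReal) (hpq : 1 / p + 1 / q = 1)
    (n : ℕ) (hn : 1 ≤ n) (x : Fin n → G)
    (f₀ : ℂ) (ft : G → ℂ) (hft : MemLp ft q ρ)
    (f : G → ℂ) (hf : ∀ y : G, f y = f₀ + ∫ z, (boxInd z y : ℂ) * ft z ∂ρ) :
    (‖(∫ y, f y ∂π) - (n : ℝ)⁻¹ * ∑ i, f (x i)‖₊ : ENNReal) ≤
      Hnorm q f₀ ft ρ *
        eLpNorm (fun z : G =>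
          (π {y : G | ∀ j, (y : Fin d → ℝ) j < (z : Fin d → ℝ) j}).toReal
            - (n : ℝ)⁻¹ * ∑ i, boxInd z (x i)) p ρ := by
  have : HolderConjugate p q := holderConjugate_iff.2 (by simpa only [one_div] using hpq)
  have h_disc : localDiscrepancy boxInd π x = fun z : G =>
      (π {y : G | ∀ j, (y : Fin d → ℝ) j < (z : Fin d → ℝ) j}).toReal
        - (n : ℝ)⁻¹ * ∑ i, boxInd z (x i) := by
    ext z
    rw [localDiscrepancy, integral_boxInd]
  calc _ ≤ eLpNorm ft q ρ * eLpNorm (localDiscrepancy boxInd π x) p ρ :=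
        enorm_integral_sub_average_le measurable_uncurry_boxInd norm_boxInd_le_one hft hf
          (Nat.one_le_iff_ne_zero.mp hn) x
    _ ≤ _ := by
        rw [h_disc]
        gcongr
        exact eLpNorm_le_Hnorm q f₀ ft ρ

/-- Koksma–Hlawka / Hölder duality inequality: for conjugate exponents
`1 ≤ p, q ≤ ∞`, points `x_1,…,x_n ∈ G` and `f ∈ H_q` with representation
`f(x) = f₀ + ∫_G 1_{(−∞,z)_G}(x) f̃(z) ρ(dz)`, the quadrature error satisfies
`|∫_G f dπ − n⁻¹ Σ_i f(x_i)| ≤ ‖f‖_{H_q} · D*_{p,𝒜,π}(P_n)`, where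
`D*_{p,𝒜,π}(P_n)` is the `L_p(ρ)`-norm of
`z ↦ π((−∞,z)_G) − n⁻¹ Σ_i 1_{(−∞,z)_G}(x_i)` (the sup over `z` for `p = ∞`). -/
theorem koksma_hlawka_Hq {d : ℕ} {G : Set (Fin d → ℝ)}
    (π ρ : Measure G) [IsProbabilityMeasure π] [IsFiniteMeasure ρ]
    (p q : ENNReal) (hp : 1 ≤ p) (hq : 1 ≤ q) (hpq : 1 / p + 1 / q = 1)
    (n : ℕ) (hn : 1 ≤ n) (x : Fin n → G)
    (f₀ : ℂ) (ft : G → ℂ) (hft : MemLp ft q ρ)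
    (f : G → ℂ) (hf : ∀ y : G, f y = f₀ + ∫ z, (boxInd z y : ℂ) * ft z ∂ρ) :
    (‖(∫ y, f y ∂π) - (n : ℝ)⁻¹ * ∑ i, f (x i)‖₊ : ENNReal) ≤
      Hnorm q f₀ ft ρ *
        eLpNorm (fun z : G =>
          (π {y : G | ∀ j, (y : Fin d → ℝ) j < (z : Fin d → ℝ) j}).toReal
            - (n : ℝ)⁻¹ * ∑ i, boxInd z (x i)) p ρ :=
  koksma_hlawka_Hq_general π ρ p q hpq n hn x f₀ ft hft f hf
end

section
/- Let π be the normalized surface measure on S^d and C(y,u), C(y,w) spherical caps with the same center y and heights 0 ≤ u ≤ w ≤ 1 with w − u ≤ 5/M (M ≥ 1). Then π(C(y,u) \ C(y,w)) ≤ √(35/M) / B(1; d/2, 1/2), where B(s; a, b) = ∫_0^s z^{a−1}(1−z)^{b−1} dz is the incomplete beta function and π(C(y,t)) = B(1−t²; d/2, 1/2)/(2B(1; d/2, 1/2)) for 0 ≤ t ≤ 1. -/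
open MeasureTheory

/-- The spherical cap `C(y,t) = {z ∈ S^d : ⟨y,z⟩ > t}`. -/
def cap {d : ℕ} (y : EuclideanSpace ℝ (Fin (d + 1))) (t : ℝ) :
    Set (EuclideanSpace ℝ (Fin (d + 1))) :=
  {z | ‖z‖ = 1 ∧ t < inner ℝ y z}

/-- The incomplete beta function `B(s; d/2, 1/2) = ∫_0^s z^{d/2−1}(1−z)^{−1/2} dz`. -/
noncomputable def incBeta (d : ℕ) (s : ℝ) : ℝ :=
  ∫ z in (0 : ℝ)..s, z ^ ((d : ℝ) / 2 - 1) * (1 - z) ^ (-(1 : ℝ) / 2)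

/-! Since `d ≥ 1`, the integrand `z^(d/2-1) (1-z)^(-1/2)` of the incomplete beta function is
dominated on `[0,1]` by the arcsine density `z^(-1/2) (1-z)^(-1/2)`, whose primitive is
`2 arcsin √z`. Hence `B(b) - B(a) ≤ 2 (arcsin √b - arcsin √a)`. Writing `s = arcsin √a`,
`t = arcsin √b`, one has `sin² (t - s) ≤ sin (t + s) sin (t - s) = b - a`, and Jordan's inequality
turns this into `t - s ≤ (π/2) √(b - a)`. For the caps, `b - a = (w + u)(w - u) ≤ 10/M`, and
`π² · 10/4 ≤ 35`. -/

section

open Real Set intervalIntegral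

noncomputable def betaIntegrand (p q z : ℝ) : ℝ := z ^ p * (1 - z) ^ q

section BetaIntegrand

variable {p q z : ℝ}

theorem betaIntegrand_nonneg (hz₀ : 0 ≤ z) (hz₁ : z ≤ 1) : 0 ≤ betaIntegrand p q z :=
  mul_nonneg (rpow_nonneg hz₀ _) (rpow_nonneg (by linarith) _)

theorem betaIntegrand_pos (hz₀ : 0 < z) (hz₁ : z < 1) : 0 < betaIntegrand p q z :=
  mul_pos (rpow_pos_of_pos hz₀ _) (rpow_pos_of_pos (by linarith) _)

theorem betaIntegrand_one_sub : betaIntegrand p q (1 - z) = betaIntegrand q p z := by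
  simp only [betaIntegrand, sub_sub_cancel, mul_comm]

theorem betaIntegrand_le_of_exponent_le {p' : ℝ} (hp : p' ≤ p) (hz₀ : 0 < z) (hz₁ : z ≤ 1) :
    betaIntegrand p q z ≤ betaIntegrand p' q z :=
  mul_le_mul_of_nonneg_right (rpow_le_rpow_of_exponent_ge hz₀ hz₁ hp)
    (rpow_nonneg (by linarith) _)

theorem intervalIntegrable_betaIntegrand_zero_half (hp : -1 < p) :
    IntervalIntegrable (betaIntegrand p q) volume 0 (1 / 2) := by
  refine (intervalIntegrable_rpow' hp).mul_continuousOn ?_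
  refine (continuous_const.sub continuous_id).continuousOn.rpow_const fun x hx => Or.inl ?_
  rw [uIcc_of_le (by norm_num)] at hx
  simp only [Pi.sub_apply, id_eq]
  linarith [hx.2]

theorem intervalIntegrable_betaIntegrand (hp : -1 < p) (hq : -1 < q) :
    IntervalIntegrable (betaIntegrand p q) volume 0 1 := by
  refine (intervalIntegrable_betaIntegrand_zero_half hp).trans ?_
  have h := ((intervalIntegrable_betaIntegrand_zero_half (q := p) hq).comp_sub_left 1).symm
  norm_num [betaIntegrand_one_sub] at h
  exact h

theorem hasDerivAt_two_mul_arcsin_sqrt (hz₀ : 0 < z) (hz₁ : z < 1) :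
    HasDerivAt (fun x => 2 * arcsin (√x)) (betaIntegrand (-(1 : ℝ) / 2) (-(1 : ℝ) / 2) z) z := by
  have hsqrt_lt : √z < 1 := (sqrt_lt' one_pos).mpr (by simpa using hz₁)
  have hasin : HasDerivAt arcsin (1 / √(1 - √z ^ 2)) (√z) :=
    hasDerivAt_arcsin (by linarith [sqrt_nonneg z]) hsqrt_lt.ne
  refine ((hasin.comp z (hasDerivAt_sqrt hz₀.ne')).const_mul 2).congr_deriv ?_
  have hneg_half : ∀ x : ℝ, 0 ≤ x → x ^ (-(1 : ℝ) / 2) = 1 / √x := fun x hx => by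
    rw [neg_div, rpow_neg hx, ← sqrt_eq_rpow, one_div]
  rw [sq_sqrt hz₀.le, betaIntegrand, hneg_half z hz₀.le, hneg_half (1 - z) (by linarith)]
  have : 0 < √(1 - z) := sqrt_pos.2 (by linarith)
  have : 0 < √z := sqrt_pos.2 hz₀
  field_simp

end BetaIntegrand

theorem integral_betaIntegrand_neg_half {a b : ℝ} (ha : 0 ≤ a) (hab : a ≤ b) (hb : b ≤ 1) :
    ∫ z in a..b, betaIntegrand (-(1 : ℝ) / 2) (-(1 : ℝ) / 2) z
      = 2 * arcsin (√b) - 2 * arcsin (√a) := by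
  refine integral_eq_sub_of_hasDeriv_right_of_le (f := fun x => 2 * arcsin (√x)) hab
    (by fun_prop) (fun x hx => ?_) ?_
  · exact (hasDerivAt_two_mul_arcsin_sqrt (ha.trans_lt hx.1) (hx.2.trans_le hb)).hasDerivWithinAt
  · refine (intervalIntegrable_betaIntegrand (by norm_num) (by norm_num)).mono_set ?_
    rw [uIcc_of_le hab, uIcc_of_le zero_le_one]
    exact Icc_subset_Icc ha hb

theorem sin_sub_sq_le_sin_sq_sub_sin_sq {s t : ℝ} (hs : 0 ≤ s) (hst : s ≤ t) (ht : t ≤ π / 2) :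
    sin (t - s) ^ 2 ≤ sin t ^ 2 - sin s ^ 2 := by
  have hprod : sin (t + s) * sin (t - s) = sin t ^ 2 - sin s ^ 2 := by
    rw [sin_add, sin_sub]
    nlinarith [sin_sq_add_cos_sq s, sin_sq_add_cos_sq t]
  have hsin_sub : 0 ≤ sin (t - s) := sin_nonneg_of_nonneg_of_le_pi (by linarith) (by linarith)
  have hcos_t : 0 ≤ cos t := cos_nonneg_of_mem_Icc ⟨by linarith, ht⟩
  have hsin_s : 0 ≤ sin s := sin_nonneg_of_nonneg_of_le_pi hs (by linarith)
  -- `sin (t + s) - sin (t - s) = 2 cos t sin s ≥ 0`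
  have hsin_le : sin (t - s) ≤ sin (t + s) := by
    rw [sin_add, sin_sub]
    nlinarith [mul_nonneg hcos_t hsin_s]
  nlinarith

theorem arcsin_sqrt_sub_le {a b : ℝ} (ha : 0 ≤ a) (hab : a ≤ b) (hb : b ≤ 1) :
    arcsin (√b) - arcsin (√a) ≤ π / 2 * √(b - a) := by
  set s := arcsin (√a)
  set t := arcsin (√b)
  have hs : 0 ≤ s := arcsin_nonneg.2 (sqrt_nonneg a)
  have hst : s ≤ t := monotone_arcsin (sqrt_le_sqrt hab)
  have ht : t ≤ π / 2 := arcsin_le_pi_div_two _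
  have hsin_sq : ∀ x, 0 ≤ x → x ≤ 1 → sin (arcsin (√x)) ^ 2 = x := fun x hx₀ hx₁ => by
    rw [sin_arcsin (by linarith [sqrt_nonneg x]) (sqrt_le_one.mpr hx₁), sq_sqrt hx₀]
  have hsin_sub : sin (t - s) ≤ √(b - a) := by
    refine le_sqrt_of_sq_le ?_
    calc sin (t - s) ^ 2 ≤ sin t ^ 2 - sin s ^ 2 := sin_sub_sq_le_sin_sq_sub_sin_sq hs hst ht
      _ = b - a := by rw [hsin_sq b (ha.trans hab) hb, hsin_sq a ha (hab.trans hb)]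
  have hjordan : 2 / π * (t - s) ≤ sin (t - s) := mul_le_sin (by linarith) (by linarith)
  calc t - s = π / 2 * (2 / π * (t - s)) := by field_simp
    _ ≤ π / 2 * √(b - a) := by gcongr; linarith

section IncBeta

variable {d : ℕ}

theorem intervalIntegrable_incBeta_integrand (hd : 1 ≤ d) {s : ℝ} (hs₀ : 0 ≤ s) (hs₁ : s ≤ 1) :
    IntervalIntegrable (betaIntegrand ((d : ℝ) / 2 - 1) (-(1 : ℝ) / 2)) volume 0 s := by
  have hd' : (1 : ℝ) ≤ d := by exact_mod_cast hd
  refine (intervalIntegrable_betaIntegrand (by linarith) (by norm_num)).mono_set ?_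
  rw [uIcc_of_le hs₀, uIcc_of_le zero_le_one]
  exact Icc_subset_Icc_right hs₁

theorem incBeta_nonneg {s : ℝ} (hs₀ : 0 ≤ s) (hs₁ : s ≤ 1) : 0 ≤ incBeta d s :=
  integral_nonneg hs₀ fun _ hz => betaIntegrand_nonneg hz.1 (hz.2.trans hs₁)

theorem incBeta_one_pos (hd : 1 ≤ d) : 0 < incBeta d 1 :=
  intervalIntegral_pos_of_pos_on (intervalIntegrable_incBeta_integrand hd zero_le_one le_rfl)
    (fun _ hz => betaIntegrand_pos hz.1 hz.2) zero_lt_one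

theorem incBeta_sub_le (hd : 1 ≤ d) {a b : ℝ} (ha : 0 ≤ a) (hab : a ≤ b) (hb : b ≤ 1) :
    incBeta d b - incBeta d a ≤ π * √(b - a) := by
  have hd' : (1 : ℝ) ≤ d := by exact_mod_cast hd
  have hint : ∀ {c e : ℝ}, 0 ≤ c → c ≤ e → e ≤ 1 →
      IntervalIntegrable (betaIntegrand ((d : ℝ) / 2 - 1) (-(1 : ℝ) / 2)) volume c e :=
    fun hc hce he => (intervalIntegrable_incBeta_integrand hd hc (hce.trans he)).symm.trans
      (intervalIntegrable_incBeta_integrand hd (hc.trans hce) he)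
  calc incBeta d b - incBeta d a
      = ∫ z in a..b, betaIntegrand ((d : ℝ) / 2 - 1) (-(1 : ℝ) / 2) z :=
        integral_interval_sub_left (hint le_rfl (ha.trans hab) hb) (hint le_rfl ha (hab.trans hb))
    _ ≤ ∫ z in a..b, betaIntegrand (-(1 : ℝ) / 2) (-(1 : ℝ) / 2) z := by
        refine integral_mono_on_of_le_Ioo hab (hint ha hab hb)
          ((intervalIntegrable_betaIntegrand (by norm_num) (by norm_num)).mono_set ?_)
          fun z hz => betaIntegrand_le_of_exponent_le (by linarith) (ha.trans_lt hz.1)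
            (hz.2.le.trans hb)
        rw [uIcc_of_le hab, uIcc_of_le zero_le_one]
        exact Icc_subset_Icc ha hb
    _ = 2 * (arcsin (√b) - arcsin (√a)) := by
        rw [integral_betaIntegrand_neg_half ha hab hb, mul_sub]
    _ ≤ π * √(b - a) := by linarith [arcsin_sqrt_sub_le ha hab hb]

theorem incBeta_one_sub_sq_sub_le (hd : 1 ≤ d) {M u w : ℝ} (hM : 0 < M) (hu : 0 ≤ u)
    (huw : u ≤ w) (hw : w ≤ 1) (hdiff : w - u ≤ 5 / M) :
    incBeta d (1 - u ^ 2) - incBeta d (1 - w ^ 2) ≤ 2 * √(35 / M) := by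
  have hgap : (1 - u ^ 2) - (1 - w ^ 2) ≤ 10 / M := by
    have : 0 ≤ 5 / M := by positivity
    rw [show (10 : ℝ) / M = 2 * (5 / M) by ring]
    nlinarith
  have hpi : π / 2 * √((1 - u ^ 2) - (1 - w ^ 2)) ≤ √(35 / M) := by
    rw [← sqrt_sq (by positivity : 0 ≤ π / 2), ← sqrt_mul (by positivity)]
    refine sqrt_le_sqrt ?_
    calc (π / 2) ^ 2 * ((1 - u ^ 2) - (1 - w ^ 2)) ≤ (π / 2) ^ 2 * (10 / M) := by gcongr
      _ = π ^ 2 * 10 / 4 / M := by ring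
      _ ≤ 35 / M := by gcongr; nlinarith [pi_lt_d2, pi_pos]
  have hw₀ : 0 ≤ 1 - w ^ 2 := by nlinarith
  have hwu : 1 - w ^ 2 ≤ 1 - u ^ 2 := by nlinarith
  have hu₁ : 1 - u ^ 2 ≤ 1 := by nlinarith
  linarith [incBeta_sub_le hd hw₀ hwu hu₁]

end IncBeta

section Cap

variable {d : ℕ} (y : EuclideanSpace ℝ (Fin (d + 1)))

theorem cap_anti : Antitone (cap y) :=
  fun _ _ hst _ hz => ⟨hz.1, hst.trans_lt hz.2⟩

theorem measurableSet_cap (t : ℝ) : MeasurableSet (cap y t) := by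
  rw [cap, Set.ofPred_and]
  exact (isClosed_eq continuous_norm continuous_const).measurableSet.inter
    (isOpen_lt continuous_const (continuous_const.inner continuous_id)).measurableSet

end Cap

end

theorem measure_cap_diff_le_general {d : ℕ} (hd : 1 ≤ d)
    (π : Measure (EuclideanSpace ℝ (Fin (d + 1))))
    (y : EuclideanSpace ℝ (Fin (d + 1)))
    (hcapMeasure : ∀ t : ℝ, t ∈ Set.Icc (0 : ℝ) 1 →
      π (cap y t) = ENNReal.ofReal (incBeta d (1 - t ^ 2) / (2 * incBeta d 1)))
    (M : ℝ) (hM : 1 ≤ M) (u w : ℝ) (hu : 0 ≤ u) (huw : u ≤ w) (hw : w ≤ 1)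
    (hdiff : w - u ≤ 5 / M) :
    π (cap y u \ cap y w) ≤ ENNReal.ofReal (Real.sqrt (35 / M) / incBeta d 1) := by
  have hB₁ := incBeta_one_pos hd
  have hcap_u := hcapMeasure u ⟨hu, huw.trans hw⟩
  have hcap_w := hcapMeasure w ⟨hu.trans huw, hw⟩
  have hB_w : 0 ≤ incBeta d (1 - w ^ 2) := incBeta_nonneg (by nlinarith) (by nlinarith)
  rw [measure_sdiff (cap_anti y huw) (measurableSet_cap y w).nullMeasurableSet
      (hcap_w ▸ ENNReal.ofReal_ne_top), hcap_u, hcap_w, ← ENNReal.ofReal_sub _ (by positivity)]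
  refine ENNReal.ofReal_le_ofReal ?_
  calc incBeta d (1 - u ^ 2) / (2 * incBeta d 1) - incBeta d (1 - w ^ 2) / (2 * incBeta d 1)
      = (incBeta d (1 - u ^ 2) - incBeta d (1 - w ^ 2)) / 2 / incBeta d 1 := by ring
    _ ≤ Real.sqrt (35 / M) / incBeta d 1 := by
      gcongr
      linarith [incBeta_one_sub_sq_sub_le hd (by linarith) hu huw hw hdiff]

/-- Lemma: if `π` is the normalized surface measure on `S^d`, so that
`π(C(y,t)) = B(1−t²; d/2, 1/2)/(2B(1; d/2, 1/2))` for `0 ≤ t ≤ 1`, and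
`0 ≤ u ≤ w ≤ 1` with `w − u ≤ 5/M` (`M ≥ 1`), then
`π(C(y,u) \ C(y,w)) ≤ √(35/M) / B(1; d/2, 1/2)`. -/
theorem measure_cap_diff_le {d : ℕ} (hd : 1 ≤ d)
    (π : Measure (EuclideanSpace ℝ (Fin (d + 1)))) [IsProbabilityMeasure π]
    (y : EuclideanSpace ℝ (Fin (d + 1))) (hy : ‖y‖ = 1)
    (hcapMeasure : ∀ t : ℝ, t ∈ Set.Icc (0 : ℝ) 1 →
      π (cap y t) = ENNReal.ofReal (incBeta d (1 - t ^ 2) / (2 * incBeta d 1)))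
    (M : ℝ) (hM : 1 ≤ M) (u w : ℝ) (hu : 0 ≤ u) (huw : u ≤ w) (hw : w ≤ 1)
    (hdiff : w - u ≤ 5 / M) :
    π (cap y u \ cap y w) ≤ ENNReal.ofReal (Real.sqrt (35 / M) / incBeta d 1) :=
  measure_cap_diff_le_general hd π y hcapMeasure M hM u w hu huw hw hdiff
end
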